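/- Let a strong AMD code be given with m ≥ 3 sources in a finite abelian group G of order n ≥ 2, and let a = Σ_{s∈S} a_s. If the code is simultaneously R-optimal and G-optimal, i.e., for every source s and every nonzero Δ ∈ G both ε_{Δ,s} ≤ (a − a_s)/(n−1) and ε_{Δ,s} ≤ 1/a_s hold, then a_s = 1 for every s and n = m; consequently ε_{Δ,s} = 1 for every s and every nonzero Δ, so the adversary's optimal success probability ε̂ equals 1. -/
import Mathlib


/-- The success probability ε_{Δ,s} of the substitution Δ on source s in a strong AMD code:
ε_{Δ,s} = Σ_{g ∈ A(s), g+Δ ∈ A(s') for some s' ≠ s} p_s(g). -/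
noncomputable def strongEps {G : Type*} [AddCommGroup G] [DecidableEq G] {m : ℕ}
    (A : Fin m → Finset G) (p : Fin m → G → ℝ) (s : Fin m) (Δ : G) : ℝ :=
  ∑ g ∈ (A s).filter (fun g => ∃ j, j ≠ s ∧ g + Δ ∈ A j), p s g

/-- If all terms are at most `c` and the sum equals `card • c`, then every term equals `c`. -/
lemma aux_sum_eq_of_le {α : Type*} {T : Finset α} {f : α → ℝ} {c : ℝ}
    (hle : ∀ x ∈ T, f x ≤ c) (hsum : ∑ x ∈ T, f x = T.card • c) :
    ∀ x ∈ T, f x = c := by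
  intro x hx
  by_contra hnex
  have h1 : ∑ y ∈ T, f y < ∑ _y ∈ T, c :=
    Finset.sum_lt_sum hle ⟨x, hx, lt_of_le_of_ne (hle x hx) hnex⟩
  rw [Finset.sum_const] at h1
  exact absurd hsum (ne_of_lt h1)

lemma aux_single_le_eps {G : Type*} [AddCommGroup G] [DecidableEq G] {m : ℕ}
    (A : Fin m → Finset G) (p : Fin m → G → ℝ)
    (hp0 : ∀ i, ∀ g ∈ A i, 0 ≤ p i g)
    {s j : Fin m} {g Δ : G} (hg : g ∈ A s) (hj : j ≠ s) (hmem : g + Δ ∈ A j) :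
    p s g ≤ strongEps A p s Δ := by
  apply Finset.single_le_sum (f := p s)
  · intro x hx; exact hp0 s x (Finset.mem_filter.mp hx).1
  · exact Finset.mem_filter.mpr ⟨hg, j, hj, hmem⟩

lemma aux_pair_le_eps {G : Type*} [AddCommGroup G] [DecidableEq G] {m : ℕ}
    (A : Fin m → Finset G) (p : Fin m → G → ℝ)
    (hp0 : ∀ i, ∀ g ∈ A i, 0 ≤ p i g)
    {s j j' : Fin m} {x x' Δ : G} (hx : x ∈ A s) (hx' : x' ∈ A s) (hxx : x ≠ x')
    (hj : j ≠ s) (h1 : x + Δ ∈ A j) (hj' : j' ≠ s) (h2 : x' + Δ ∈ A j') :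
    p s x + p s x' ≤ strongEps A p s Δ := by
  rw [← Finset.sum_pair hxx]
  apply Finset.sum_le_sum_of_subset_of_nonneg
  · intro y hy
    rcases Finset.mem_insert.mp hy with rfl | hy
    · exact Finset.mem_filter.mpr ⟨hx, j, hj, h1⟩
    · rw [Finset.mem_singleton] at hy
      subst hy
      exact Finset.mem_filter.mpr ⟨hx', j', hj', h2⟩
  · intro i hi _
    exact hp0 s i (Finset.mem_filter.mp hi).1

/-- Exact computation: the sum of ε over all nonzero Δ equals a − a_s. -/
lemma aux_eps_sum {G : Type*} [AddCommGroup G] [Fintype G] [DecidableEq G] {m : ℕ}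
    (A : Fin m → Finset G)
    (hdisj : ∀ i j, i ≠ j → Disjoint (A i) (A j))
    (p : Fin m → G → ℝ) (hp1 : ∀ i, ∑ g ∈ A i, p i g = 1) (s : Fin m) :
    ∑ Δ ∈ Finset.univ.erase (0 : G), strongEps A p s Δ
      = ∑ j ∈ Finset.univ.erase s, ((A j).card : ℝ) := by
  calc ∑ Δ ∈ Finset.univ.erase (0 : G), strongEps A p s Δ
      = ∑ Δ ∈ Finset.univ.erase (0 : G), ∑ g ∈ A s,
          if ∃ j, j ≠ s ∧ g + Δ ∈ A j then p s g else 0 := by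
        refine Finset.sum_congr rfl fun Δ _ => ?_
        rw [strongEps, Finset.sum_filter]
    _ = ∑ g ∈ A s, ∑ Δ ∈ Finset.univ.erase (0 : G),
          if ∃ j, j ≠ s ∧ g + Δ ∈ A j then p s g else 0 := Finset.sum_comm
    _ = ∑ g ∈ A s, (∑ j ∈ Finset.univ.erase s, ((A j).card : ℝ)) * p s g := by
        refine Finset.sum_congr rfl fun g hg => ?_
        have h0 : (if ∃ j, j ≠ s ∧ g + (0 : G) ∈ A j then p s g else 0) = 0 := by
          rw [if_neg]
          rintro ⟨j, hj, hmem⟩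
          rw [add_zero] at hmem
          exact (Finset.disjoint_left.mp (hdisj j s hj) hmem) hg
        rw [Finset.sum_erase_eq_sub (Finset.mem_univ (0 : G)), h0, sub_zero,
          ← Finset.sum_filter, Finset.sum_const, nsmul_eq_mul]
        congr 1
        have hbij : (Finset.univ.filter fun Δ : G => ∃ j, j ≠ s ∧ g + Δ ∈ A j).card
            = ((Finset.univ.erase s).biUnion A).card := by
          apply Finset.card_bij (fun Δ _ => g + Δ)
          · intro Δ hΔ
            obtain ⟨j, hj, hmem⟩ := (Finset.mem_filter.mp hΔ).2
            exact Finset.mem_biUnion.mpr ⟨j, Finset.mem_erase.mpr ⟨hj, Finset.mem_univ j⟩, hmem⟩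
          · intro Δ₁ _ Δ₂ _ h
            exact add_left_cancel h
          · intro y hy
            obtain ⟨j, hj, hmem⟩ := Finset.mem_biUnion.mp hy
            refine ⟨y - g, Finset.mem_filter.mpr ⟨Finset.mem_univ _,
              j, (Finset.mem_erase.mp hj).1, ?_⟩, by abel⟩
            rw [show g + (y - g) = y by abel]
            exact hmem
        have hcardB : ((Finset.univ.erase s).biUnion A).card
            = ∑ j ∈ Finset.univ.erase s, (A j).card :=
          Finset.card_biUnion (fun i _ j _ hij => hdisj i j hij)
        rw [hbij, hcardB]
        push_cast
        ring
    _ = ∑ j ∈ Finset.univ.erase s, ((A j).card : ℝ) := by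
        rw [← Finset.mul_sum, hp1 s, mul_one]

/-- A strong AMD code with m ≥ 3 sources in a group of order n ≥ 2 that is
simultaneously R-optimal and G-optimal (ε_{Δ,s} ≤ (a − a_s)/(n−1) and ε_{Δ,s} ≤ 1/a_s for
every s and every nonzero Δ) must have a_s = 1 for every s and n = m; consequently
ε_{Δ,s} = 1 for every s and every nonzero Δ. -/
theorem stmt18 {G : Type*} [AddCommGroup G] [Fintype G] [DecidableEq G]
    (n m : ℕ) (hn : Fintype.card G = n) (hn2 : 2 ≤ n) (hm : 3 ≤ m)
    (A : Fin m → Finset G)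
    (hdisj : ∀ i j, i ≠ j → Disjoint (A i) (A j))
    (hne : ∀ i, (A i).Nonempty)
    (p : Fin m → G → ℝ)
    (hp0 : ∀ i, ∀ g ∈ A i, 0 ≤ p i g)
    (hp1 : ∀ i, ∑ g ∈ A i, p i g = 1)
    (a : ℕ) (ha : a = ∑ i : Fin m, (A i).card)
    (hR : ∀ s : Fin m, ∀ Δ : G, Δ ≠ 0 →
      strongEps A p s Δ ≤ ((a : ℝ) - ((A s).card : ℝ)) / ((n : ℝ) - 1))
    (hG : ∀ s : Fin m, ∀ Δ : G, Δ ≠ 0 →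
      strongEps A p s Δ ≤ 1 / (((A s).card : ℝ))) :
    (∀ s : Fin m, (A s).card = 1) ∧ n = m ∧
      (∀ s : Fin m, ∀ Δ : G, Δ ≠ 0 → strongEps A p s Δ = 1) := by
  have hmnt : Nontrivial (Fin m) := by
    refine ⟨⟨⟨0, by omega⟩, ⟨1, by omega⟩, ?_⟩⟩
    simp [Fin.ext_iff]
  have hne1 : (n : ℝ) - 1 ≠ 0 := by
    have : (2 : ℝ) ≤ (n : ℝ) := by exact_mod_cast hn2
    linarith
  -- the probability distributions are uniform
  have puniform : ∀ s : Fin m, ∀ g ∈ A s, p s g = 1 / ((A s).card : ℝ) := by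
    intro s
    have hcard : (A s).card ≠ 0 := Finset.card_ne_zero.mpr (hne s)
    have hle : ∀ g ∈ A s, p s g ≤ 1 / ((A s).card : ℝ) := by
      intro g hg
      obtain ⟨j, hj⟩ := exists_ne s
      obtain ⟨h, hh⟩ := hne j
      have hΔ : h - g ≠ 0 := by
        rw [sub_ne_zero]
        intro he
        exact (Finset.disjoint_left.mp (hdisj j s hj) (he ▸ hh)) hg
      have h1 : p s g ≤ strongEps A p s (h - g) :=
        aux_single_le_eps A p hp0 hg hj (by rw [show g + (h - g) = h by abel]; exact hh)
      exact h1.trans (hG s (h - g) hΔ)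
    apply aux_sum_eq_of_le hle
    have hc : ((A s).card : ℝ) ≠ 0 := Nat.cast_ne_zero.mpr hcard
    rw [hp1 s, nsmul_eq_mul, mul_one_div, div_self hc]
  -- each ε equals the constant (a - a_s)/(n-1)
  have epsconst : ∀ s : Fin m, ∀ Δ : G, Δ ≠ 0 →
      strongEps A p s Δ = ((a : ℝ) - ((A s).card : ℝ)) / ((n : ℝ) - 1) := by
    intro s
    have hT : (Finset.univ.erase (0 : G)).card = n - 1 := by
      rw [Finset.card_erase_of_mem (Finset.mem_univ _), Finset.card_univ, hn]
    have hcast : ((n - 1 : ℕ) : ℝ) = (n : ℝ) - 1 := by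
      have h1 : (1 : ℕ) ≤ n := by omega
      push_cast [Nat.cast_sub h1]
      ring
    have hsplit : ∑ j ∈ Finset.univ.erase s, ((A j).card : ℝ)
        = (a : ℝ) - ((A s).card : ℝ) := by
      rw [Finset.sum_erase_eq_sub (Finset.mem_univ s)]
      congr 1
      rw [ha]
      push_cast
      ring
    have hsum : ∑ Δ ∈ Finset.univ.erase (0 : G), strongEps A p s Δ
        = (Finset.univ.erase (0 : G)).card • (((a : ℝ) - ((A s).card : ℝ)) / ((n : ℝ) - 1)) := by
      rw [aux_eps_sum A hdisj p hp1 s, hsplit, hT, nsmul_eq_mul, hcast,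
        mul_div_cancel₀ _ hne1]
    intro Δ hΔ
    exact aux_sum_eq_of_le
      (fun Δ' hΔ' => hR s Δ' (Finset.mem_erase.mp hΔ').1) hsum Δ
      (Finset.mem_erase.mpr ⟨hΔ, Finset.mem_univ _⟩)
  -- a ≥ a_s + 1
  have haS : ∀ s : Fin m, (A s).card + 1 ≤ a := by
    intro s
    obtain ⟨j, hj⟩ := exists_ne s
    have h1 : 1 ≤ (A j).card := Finset.card_pos.mpr (hne j)
    have h2 : (A j).card ≤ ∑ i ∈ Finset.univ.erase s, (A i).card :=
      Finset.single_le_sum (f := fun i => (A i).card) (fun i _ => Nat.zero_le _)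
        (Finset.mem_erase.mpr ⟨hj, Finset.mem_univ _⟩)
    have h3 : (A s).card + ∑ i ∈ Finset.univ.erase s, (A i).card
        = ∑ i : Fin m, (A i).card :=
      Finset.add_sum_erase _ (fun i => (A i).card) (Finset.mem_univ s)
    omega
  -- every nonzero Δ has a witness for every source
  have factB : ∀ t : Fin m, ∀ Δ : G, Δ ≠ 0 →
      ∃ y ∈ A t, ∃ v, v ≠ t ∧ y + Δ ∈ A v := by
    intro t Δ hΔ
    have hpos : 0 < strongEps A p t Δ := by
      rw [epsconst t Δ hΔ]
      apply div_pos
      · have h1 := haS t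
        have h2 : ((A t).card : ℝ) + 1 ≤ (a : ℝ) := by exact_mod_cast h1
        linarith
      · have : (2 : ℝ) ≤ (n : ℝ) := by exact_mod_cast hn2
        linarith
    obtain ⟨g, hg⟩ := Finset.nonempty_of_sum_ne_zero (ne_of_gt hpos)
    have hg' := Finset.mem_filter.mp hg
    exact ⟨g, hg'.1, hg'.2⟩
  -- two distinct witnesses for the same Δ are impossible
  have ntw : ∀ s : Fin m, ∀ z z' : G, z ∈ A s → z' ∈ A s → z ≠ z' → ∀ Δ : G, Δ ≠ 0 →
      (∃ j, j ≠ s ∧ z + Δ ∈ A j) → (∃ j', j' ≠ s ∧ z' + Δ ∈ A j') → False := by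
    rintro s z z' hz hz' hzz Δ hΔ0 ⟨j, hj, h1⟩ ⟨j', hj', h2⟩
    have hp : p s z + p s z' ≤ strongEps A p s Δ :=
      aux_pair_le_eps A p hp0 hz hz' hzz hj h1 hj' h2
    have hub := hG s Δ hΔ0
    rw [puniform s z hz, puniform s z' hz'] at hp
    have hcpos : (0 : ℝ) < ((A s).card : ℝ) := by
      exact_mod_cast Finset.card_pos.mpr (hne s)
    have hq : (0 : ℝ) < 1 / ((A s).card : ℝ) := by positivity
    linarith
  -- main combinatorial step: all sources are singletons
  have cardone : ∀ s : Fin m, (A s).card = 1 := by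
    intro s
    by_contra hc
    have h2 : 1 < (A s).card := by
      have := Finset.card_pos.mpr (hne s); omega
    obtain ⟨x, hx, x', hx', hxx⟩ := Finset.one_lt_card.mp h2
    have hδ : x' - x ≠ 0 := sub_ne_zero.mpr (Ne.symm hxx)
    have claim : ∀ t : Fin m, t ≠ s → ∃ y ∈ A t, y + (x' - x) ∈ A s := by
      intro t ht
      obtain ⟨y, hy, v, hv, hyv⟩ := factB t (x' - x) hδ
      by_cases hvs : v = s
      · exact ⟨y, hy, hvs ▸ hyv⟩
      · exfalso
        have hyx : y - x ≠ 0 := by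
          rw [sub_ne_zero]
          intro h
          exact (Finset.disjoint_left.mp (hdisj t s ht) hy) (h ▸ hx)
        exact ntw s x x' hx hx' hxx (y - x) hyx
          ⟨t, ht, by rw [show x + (y - x) = y by abel]; exact hy⟩
          ⟨v, hvs, by rw [show x' + (y - x) = y + (x' - x) by abel]; exact hyv⟩
    have hcard2 : 1 < (Finset.univ.erase s).card := by
      rw [Finset.card_erase_of_mem (Finset.mem_univ _), Finset.card_univ, Fintype.card_fin]
      omega
    obtain ⟨t, ht', u, hu', htu⟩ := Finset.one_lt_card.mp hcard2
    have ht : t ≠ s := (Finset.mem_erase.mp ht').1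
    have hu : u ≠ s := (Finset.mem_erase.mp hu').1
    obtain ⟨y, hy, hys⟩ := claim t ht
    obtain ⟨z, hz, hzs⟩ := claim u hu
    have hyz : y ≠ z := by
      intro h
      exact (Finset.disjoint_left.mp (hdisj t u htu) hy) (h ▸ hz)
    have hne2 : y + (x' - x) ≠ z + (x' - x) := fun h => hyz (add_right_cancel h)
    exact ntw s (y + (x' - x)) (z + (x' - x)) hys hzs hne2 (-(x' - x))
      (neg_ne_zero.mpr hδ)
      ⟨t, ht, by rw [show y + (x' - x) + -(x' - x) = y by abel]; exact hy⟩
      ⟨u, hu, by rw [show z + (x' - x) + -(x' - x) = z by abel]; exact hz⟩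
  -- a = m
  have ham : a = m := by
    rw [ha]
    simp [cardone]
  -- n = m
  have hnm : n = m := by
    obtain ⟨s⟩ : Nonempty (Fin m) := ⟨⟨0, by omega⟩⟩
    obtain ⟨t, hts⟩ := exists_ne s
    obtain ⟨xs, hxs⟩ := Finset.card_eq_one.mp (cardone s)
    obtain ⟨xt, hxt⟩ := Finset.card_eq_one.mp (cardone t)
    have hxsm : xs ∈ A s := by rw [hxs]; exact Finset.mem_singleton_self xs
    have hxtm : xt ∈ A t := by rw [hxt]; exact Finset.mem_singleton_self xt
    have hΔ : xt - xs ≠ 0 := by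
      rw [sub_ne_zero]
      intro h
      rw [h] at hxtm
      exact (Finset.disjoint_left.mp (hdisj t s hts) hxtm) hxsm
    have h1 : p s xs = 1 := by
      have := hp1 s
      rwa [hxs, Finset.sum_singleton] at this
    have hlow : (1 : ℝ) ≤ strongEps A p s (xt - xs) := by
      rw [← h1]
      exact aux_single_le_eps A p hp0 hxsm hts
        (by rw [show xs + (xt - xs) = xt by abel]; exact hxtm)
    have hup : strongEps A p s (xt - xs) ≤ 1 := by
      have := hG s (xt - xs) hΔ
      rwa [cardone s, Nat.cast_one, div_one] at this
    have heq := epsconst s (xt - xs) hΔ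
    rw [le_antisymm hup hlow, cardone s, ham] at heq
    push_cast at heq
    have hmn : ((m : ℝ) - 1) / ((n : ℝ) - 1) = 1 := heq.symm
    rw [div_eq_one_iff_eq hne1] at hmn
    have : (m : ℝ) = (n : ℝ) := by linarith
    exact_mod_cast this.symm
  refine ⟨cardone, hnm, ?_⟩
  intro s Δ hΔ
  rw [epsconst s Δ hΔ, cardone s, ham, hnm]
  have hm1 : (m : ℝ) - 1 ≠ 0 := by
    have : (3 : ℝ) ≤ (m : ℝ) := by exact_mod_cast hm
    linarith
  rw [Nat.cast_one, div_self hm1]
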